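/- Let $m_3(s) = f_0 + g^T s + \tfrac12 H[s]^2 + \tfrac16 T[s]^3 + \tfrac{\sigma}{4}\|s\|^4$ with $\sigma > 0$, and suppose $s_c^{(0)}$ is a global minimizer over $\mathbb{R}^n$ of $M_c(s) = f_0 + g^T s + \tfrac12 H[s]^2 + \tfrac{\beta_0}{6}\|s\|^3 + \tfrac{\sigma}{4}\|s\|^4$ with $|\beta_0| \le B$. Then $\|s_c^{(0)}\| \le \max\big\{\big(\tfrac{12\|g\|}{\sigma}\big)^{1/3}, \big(\tfrac{6\|H\|}{\sigma}\big)^{1/2}, \tfrac{2B}{\sigma}\big\}$, where $\|H\|$ is the spectral norm of $H$. -/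

import Mathlib

/-!
Comparing the global minimizer with `s = 0` gives `M_c(s_c) ≤ f₀`, and bounding the linear,
quadratic and cubic terms from below by Cauchy–Schwarz, `‖H‖` and `|β₀| ≤ B` turns this into
`(σ/4) r⁴ ≤ ‖g‖ r + (‖H‖/2) r² + (B/6) r³` for `r = ‖s_c‖`. If `r` exceeded all three radii, each
right-hand term would be smaller than `(σ/12) r⁴`, which is absurd.
-/

open Matrix

noncomputable def euclNorm {n : ℕ} (v : Fin n → ℝ) : ℝ := Real.sqrt (v ⬝ᵥ v)

noncomputable def Mc {n : ℕ} (f0 : ℝ) (g : Fin n → ℝ) (H : Matrix (Fin n) (Fin n) ℝ)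
    (β σc : ℝ) (s : Fin n → ℝ) : ℝ :=
  f0 + g ⬝ᵥ s + (1 / 2) * (s ⬝ᵥ H.mulVec s) + (β / 6) * (euclNorm s) ^ 3
    + (σc / 4) * (euclNorm s) ^ 4

noncomputable def cube {n : ℕ} (T : Fin n → Fin n → Fin n → ℝ) (s : Fin n → ℝ) : ℝ :=
  ∑ i, ∑ j, ∑ k, T i j k * s i * s j * s k

section EuclNorm

variable {n : ℕ}

theorem dotProduct_self_nonneg (v : Fin n → ℝ) : 0 ≤ v ⬝ᵥ v :=
  Finset.sum_nonneg fun _ _ => mul_self_nonneg _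

theorem euclNorm_nonneg (v : Fin n → ℝ) : 0 ≤ euclNorm v := Real.sqrt_nonneg _

theorem euclNorm_sq (v : Fin n → ℝ) : euclNorm v ^ 2 = v ⬝ᵥ v :=
  Real.sq_sqrt (dotProduct_self_nonneg v)

@[simp]
theorem euclNorm_zero : euclNorm (0 : Fin n → ℝ) = 0 := by simp [euclNorm]

theorem abs_dotProduct_le_euclNorm_mul (u v : Fin n → ℝ) :
    |u ⬝ᵥ v| ≤ euclNorm u * euclNorm v := by
  have hCS : (u ⬝ᵥ v) ^ 2 ≤ (u ⬝ᵥ u) * (v ⬝ᵥ v) := by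
    simpa [dotProduct, pow_two] using Finset.sum_mul_sq_le_sq_mul_sq Finset.univ u v
  rw [euclNorm, euclNorm, ← Real.sqrt_mul (dotProduct_self_nonneg u)]
  exact Real.abs_le_sqrt hCS

end EuclNorm

theorem Mc_zero {n : ℕ} (f0 : ℝ) (g : Fin n → ℝ) (H : Matrix (Fin n) (Fin n) ℝ) (β σc : ℝ) :
    Mc f0 g H β σc 0 = f0 := by
  simp [Mc]

theorem sub_le_Mc {n : ℕ} (f0 : ℝ) (g : Fin n → ℝ) (H : Matrix (Fin n) (Fin n) ℝ)
    (β σc B HN : ℝ) (hβ : |β| ≤ B) (hHN : ∀ u : Fin n → ℝ, |u ⬝ᵥ H.mulVec u| ≤ HN * (u ⬝ᵥ u))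
    (s : Fin n → ℝ) :
    f0 - euclNorm g * euclNorm s - HN / 2 * euclNorm s ^ 2 - B / 6 * euclNorm s ^ 3
        + σc / 4 * euclNorm s ^ 4 ≤ Mc f0 g H β σc s := by
  have hlin : -(euclNorm g * euclNorm s) ≤ g ⬝ᵥ s :=
    neg_le_of_abs_le (abs_dotProduct_le_euclNorm_mul g s)
  have hquad : -(HN * euclNorm s ^ 2) ≤ s ⬝ᵥ H.mulVec s :=
    neg_le_of_abs_le (euclNorm_sq s ▸ hHN s)
  have hcub : -B * euclNorm s ^ 3 ≤ β * euclNorm s ^ 3 :=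
    mul_le_mul_of_nonneg_right (neg_le_of_abs_le hβ) (pow_nonneg (euclNorm_nonneg s) 3)
  unfold Mc
  linarith

theorem le_max_of_quartic_le_poly {σ G HN B r : ℝ} (hσ : 0 < σ) (hG : 0 ≤ G)
    (h : σ / 4 * r ^ 4 ≤ G * r + HN / 2 * r ^ 2 + B / 6 * r ^ 3) :
    r ≤ max (max ((12 * G / σ) ^ ((1 : ℝ) / 3)) (Real.sqrt (6 * HN / σ))) (2 * B / σ) := by
  by_contra! hr
  simp only [max_lt_iff] at hr
  obtain ⟨⟨hrG, hrH⟩, hrB⟩ := hr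
  have hr0 : 0 < r := (Real.sqrt_nonneg _).trans_lt hrH
  have hG' : 12 * G < σ * r ^ 3 := by
    rw [one_div, Real.rpow_inv_lt_iff_of_pos (by positivity) hr0.le (by norm_num),
      div_lt_iff₀ hσ] at hrG
    rw [← Real.rpow_natCast r 3]
    push_cast
    linarith
  have hH' : 6 * HN < σ * r ^ 2 := by
    rw [Real.sqrt_lt' hr0, div_lt_iff₀ hσ] at hrH
    linarith
  have hB' : 2 * B < σ * r := by
    rw [div_lt_iff₀ hσ] at hrB
    linarith
  nlinarith [mul_lt_mul_of_pos_right hG' hr0, mul_lt_mul_of_pos_right hH' (pow_pos hr0 2),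
    mul_lt_mul_of_pos_right hB' (pow_pos hr0 3)]

theorem stmt_19_general {n : ℕ} (f0 : ℝ) (g : Fin n → ℝ) (H : Matrix (Fin n) (Fin n) ℝ)
    (σ β0 B HN : ℝ)
    (hσ : 0 < σ) (hβ : |β0| ≤ B)
    -- `HN` is the spectral norm of `H`: it bounds the quadratic form
    (hHN : ∀ u : Fin n → ℝ, |u ⬝ᵥ H.mulVec u| ≤ HN * (u ⬝ᵥ u))
    (sc0 : Fin n → ℝ)
    (hmin : ∀ s : Fin n → ℝ, Mc f0 g H β0 σ sc0 ≤ Mc f0 g H β0 σ s) :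
    euclNorm sc0 ≤ max (max ((12 * euclNorm g / σ) ^ ((1 : ℝ) / 3))
        (Real.sqrt (6 * HN / σ))) (2 * B / σ) := by
  have hle_f0 : Mc f0 g H β0 σ sc0 ≤ f0 := (hmin 0).trans_eq (Mc_zero f0 g H β0 σ)
  have hlower := sub_le_Mc f0 g H β0 σ B HN hβ hHN sc0
  exact le_max_of_quartic_le_poly hσ (euclNorm_nonneg g) (by linarith)

theorem stmt_19 {n : ℕ} (f0 : ℝ) (g : Fin n → ℝ) (H : Matrix (Fin n) (Fin n) ℝ)
    (T : Fin n → Fin n → Fin n → ℝ) (σ β0 B HN : ℝ)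
    (hσ : 0 < σ) (hβ : |β0| ≤ B) (hH : H.IsSymm)
    -- `HN` is the spectral norm of `H`: it bounds the quadratic form
    (hHN : ∀ u : Fin n → ℝ, |u ⬝ᵥ H.mulVec u| ≤ HN * (u ⬝ᵥ u))
    (sc0 : Fin n → ℝ)
    (hmin : ∀ s : Fin n → ℝ, Mc f0 g H β0 σ sc0 ≤ Mc f0 g H β0 σ s) :
    euclNorm sc0 ≤ max (max ((12 * euclNorm g / σ) ^ ((1 : ℝ) / 3))
        (Real.sqrt (6 * HN / σ))) (2 * B / σ) :=
  stmt_19_general f0 g H σ β0 B HN hσ hβ hHN sc0 hmin
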